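/- arXiv:1701.05805 — 6 statements merged into one kernel-verified Lean document; each statement's English description precedes it below -/
import Mathlib

section
/- The quotient algebra A_σ = ℂ[x]/I_σ is isomorphic as a vector space to the image of the Hankel operator H_σ; in particular H_σ has finite rank r if and only if A_σ is an Artinian algebra of dimension r over ℂ. -/
noncomputable def Hankel (n : ℕ) (σ : Module.Dual ℂ (MvPolynomial (Fin n) ℂ)) :
    MvPolynomial (Fin n) ℂ →ₗ[ℂ] Module.Dual ℂ (MvPolynomial (Fin n) ℂ) :=
  (LinearMap.llcomp ℂ (MvPolynomial (Fin n) ℂ) (MvPolynomial (Fin n) ℂ) ℂ σ).comp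
    (LinearMap.mul ℂ (MvPolynomial (Fin n) ℂ))

/-- The ideal `I_σ = ker H_σ = { p : ∀ q, ⟨σ | p q⟩ = 0 }`. -/
noncomputable def Iσ (n : ℕ) (σ : Module.Dual ℂ (MvPolynomial (Fin n) ℂ)) :
    Ideal (MvPolynomial (Fin n) ℂ) where
  carrier := {p | ∀ q, σ (p * q) = 0}
  add_mem' := by
    intro a b ha hb q
    rw [add_mul, map_add, ha q, hb q, add_zero]
  zero_mem' := by intro q; rw [zero_mul, map_zero]
  smul_mem' := by
    intro c p hp q
    have := hp (c * q)
    rw [smul_eq_mul, show c * p * q = p * (c * q) by ring]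
    exact this

/-- `A_σ = ℂ[x]/I_σ` is isomorphic as a vector space to the image of `H_σ`;
`H_σ` has finite rank `r` iff `A_σ` is an Artinian algebra of dimension `r`. -/
theorem stmt3 (n : ℕ) (σ : Module.Dual ℂ (MvPolynomial (Fin n) ℂ)) :
    Nonempty ((MvPolynomial (Fin n) ℂ ⧸ Iσ n σ) ≃ₗ[ℂ]
        ↥(LinearMap.range (Hankel n σ))) ∧
    ∀ r : ℕ,
      ((Module.Finite ℂ ↥(LinearMap.range (Hankel n σ)) ∧
          Module.finrank ℂ ↥(LinearMap.range (Hankel n σ)) = r) ↔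
        (IsArtinianRing (MvPolynomial (Fin n) ℂ ⧸ Iσ n σ) ∧
          Module.Finite ℂ (MvPolynomial (Fin n) ℂ ⧸ Iσ n σ) ∧
          Module.finrank ℂ (MvPolynomial (Fin n) ℂ ⧸ Iσ n σ) = r)) := by
  have happ : ∀ p q, Hankel n σ p q = σ (p * q) := fun p q => rfl
  have hker : (Iσ n σ).restrictScalars ℂ = LinearMap.ker (Hankel n σ) := by
    ext p
    simp only [Submodule.restrictScalars_mem, LinearMap.mem_ker]
    constructor
    · intro hp
      refine LinearMap.ext fun q => ?_
      simpa [happ] using hp q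
    · intro hp q
      have := LinearMap.congr_fun hp q
      simpa [happ] using this
  have e : (MvPolynomial (Fin n) ℂ ⧸ Iσ n σ) ≃ₗ[ℂ] ↥(LinearMap.range (Hankel n σ)) :=
    (((Submodule.Quotient.restrictScalarsEquiv ℂ
        ((Iσ n σ) : Submodule (MvPolynomial (Fin n) ℂ) (MvPolynomial (Fin n) ℂ))).symm.trans
      (Submodule.quotEquivOfEq _ _ hker)).trans (Hankel n σ).quotKerEquivRange)
  refine ⟨⟨e⟩, fun r => ⟨fun ⟨hf, hr⟩ => ?_, fun ⟨_, hf, hr⟩ => ?_⟩⟩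
  · have hf' : Module.Finite ℂ (MvPolynomial (Fin n) ℂ ⧸ Iσ n σ) :=
      Module.Finite.equiv e.symm
    refine ⟨IsArtinianRing.of_finite ℂ _, hf', ?_⟩
    rw [e.finrank_eq, hr]
  · exact ⟨Module.Finite.equiv e, by rw [← e.finrank_eq, hr]⟩
end

section
/- The series σ(y) = ω(y) e_ξ(y), with ω ∈ ℂ[y] \ {0} and ξ ∈ ℂⁿ, is indecomposable: σ cannot be written as σ = σ₁ + σ₂ with Im H_σ = Im H_{σ₁} ⊕ Im H_{σ₂} and both summands nonzero. -/
/-- The differential operator `∂^β = ∂₁^{β₁} ⋯ ∂ₙ^{βₙ}` on `ℂ[x₁,…,xₙ]`. -/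
noncomputable def pderivPow (n : ℕ) (β : Fin n →₀ ℕ) :
    Module.End ℂ (MvPolynomial (Fin n) ℂ) :=
  (List.ofFn fun i : Fin n =>
    ((MvPolynomial.pderiv i).toLinearMap :
        Module.End ℂ (MvPolynomial (Fin n) ℂ)) ^ (β i)).prod

/-- The polynomial-exponential series `ω(y) e_ξ(y)` viewed as the linear functional
`p ↦ Σ_β ω_β (∂^β p)(ξ)` on `ℂ[x]` (its moments are `⟨ω e_ξ | x^α⟩`). -/
noncomputable def polyExp (n : ℕ) (ω : MvPolynomial (Fin n) ℂ) (ξ : Fin n → ℂ) :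
    Module.Dual ℂ (MvPolynomial (Fin n) ℂ) :=
  ∑ β ∈ ω.support, MvPolynomial.coeff β ω •
    ((MvPolynomial.aeval ξ).toLinearMap ∘ₗ pderivPow n β)

/-- `μ(ω)`: the dimension of the space spanned by `ω` and all its partial
derivatives of all orders. -/
noncomputable def mu (n : ℕ) (ω : MvPolynomial (Fin n) ℂ) : ℕ :=
  Module.finrank ℂ
    ↥(Submodule.span ℂ (Set.range fun β : Fin n →₀ ℕ => pderivPow n β ω))

/-!
If `σ ≠ 0` and `Im H_σ ⊆ Im H_{ω e_ξ}`, then `σ = H_σ(1)` is itself of the form `ω' e_ξ` with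
`ω' ≠ 0`. The image `Im H_σ` is stable under multiplication by `xᵢ - ξᵢ`, which acts on `ω' e_ξ`
as `∂ᵢ` acts on `ω'`; differentiating `ω'` down to a nonzero constant puts `e_ξ`, i.e. evaluation
at `ξ`, into `Im H_σ`. So `e_ξ` lies in both `Im H_{σ₁}` and `Im H_{σ₂}`, and their sum is not
direct.
-/

namespace MvPolynomial

variable {σ R : Type*}

theorem pderiv_comm [CommRing R] (i j : σ) (p : MvPolynomial σ R) :
    pderiv i (pderiv j p) = pderiv j (pderiv i p) := by
  have : ⁅pderiv (R := R) i, pderiv (R := R) j⁆ = 0 := by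
    have hX : ∀ a b k : σ, pderiv a (pderiv b (X k : MvPolynomial σ R)) = 0 := by
      intro a b k
      rcases eq_or_ne k b with rfl | hkb
      · simp
      · simp [pderiv_X_of_ne hkb]
    refine derivation_ext fun k => ?_
    simp [Derivation.commutator_apply, hX]
  simpa [Derivation.commutator_apply, sub_eq_zero] using congrArg (· p) this

theorem totalDegree_pderiv_lt [CommSemiring R] {i : σ} {p : MvPolynomial σ R}
    (h : pderiv i p ≠ 0) : (pderiv i p).totalDegree < p.totalDegree := by
  have key : ∀ m ∈ (pderiv i p).support, (m.sum fun _ e => e) < p.totalDegree := by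
    intro m hm
    rw [mem_support_iff, coeff_pderiv] at hm
    have hdeg := le_totalDegree (mem_support_iff.mpr (left_ne_zero_of_mul hm))
    rw [Finsupp.sum_add_index' (fun _ => rfl) (fun _ _ _ => rfl),
      Finsupp.sum_single_index rfl] at hdeg
    omega
  obtain ⟨m, hm⟩ := support_nonempty.mpr h
  exact (Finset.sup_lt_iff ((Nat.zero_le _).trans_lt (key m hm))).mpr key

theorem eq_C_of_forall_pderiv_eq_zero [CommSemiring R] [NoZeroDivisors R] [CharZero R]
    {p : MvPolynomial σ R} (h : ∀ i, pderiv i p = 0) : p = C (coeff 0 p) := by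
  classical
  ext m
  rcases eq_or_ne m 0 with rfl | hm
  · simp
  obtain ⟨i, hi⟩ := Finsupp.ne_iff.mp hm
  have hcoeff := coeff_pderiv (i := i) p (m - Finsupp.single i 1)
  rw [h i, coeff_zero, tsub_add_cancel_of_le
    (Finsupp.single_le_iff.mpr (Nat.one_le_iff_ne_zero.mpr hi))] at hcoeff
  rw [coeff_C, if_neg (Ne.symm hm)]
  exact (mul_eq_zero.mp hcoeff.symm).resolve_right (Nat.cast_add_one_ne_zero _)

theorem one_mem_of_forall_pderiv_mem {K : Type*} [Field K] [CharZero K]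
    {S : Submodule K (MvPolynomial σ K)} (hS : ∀ i, ∀ p ∈ S, pderiv i p ∈ S)
    {p : MvPolynomial σ K} (hp : p ∈ S) (hp0 : p ≠ 0) : (1 : MvPolynomial σ K) ∈ S := by
  induction hd : p.totalDegree using Nat.strong_induction_on generalizing p with
  | _ d ih =>
    by_cases hconst : ∀ i, pderiv i p = 0
    · obtain ⟨c, rfl⟩ : ∃ c, p = C c := ⟨_, eq_C_of_forall_pderiv_eq_zero hconst⟩
      have hc : c ≠ 0 := fun h0 => hp0 (by rw [h0, map_zero])
      simpa [smul_eq_C_mul, ← C_mul, inv_mul_cancel₀ hc] using S.smul_mem c⁻¹ hp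
    · push Not at hconst
      obtain ⟨i, hi⟩ := hconst
      exact ih _ (hd ▸ totalDegree_pderiv_lt hi) (hS i p hp) hi rfl

end MvPolynomial

namespace List

theorem prod_ofFn_mul_of_commute {M : Type*} [Monoid M] :
    ∀ {m : ℕ} (f g : Fin m → M), (∀ i j, Commute (f i) (g j)) →
      (ofFn fun i => f i * g i).prod = (ofFn f).prod * (ofFn g).prod
  | 0, _, _, _ => by simp
  | m + 1, f, g, h => by
    have hg : Commute (g 0) (ofFn fun i : Fin m => f i.succ).prod :=
      Commute.list_prod_right _ _ fun x hx => by
        obtain ⟨i, rfl⟩ := mem_ofFn.mp hx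
        exact (h _ _).symm
    simp only [ofFn_succ, prod_cons,
      prod_ofFn_mul_of_commute (fun i => f i.succ) (fun i => g i.succ) fun i j => h _ _]
    rw [mul_assoc, ← mul_assoc (g 0), hg.eq, mul_assoc, mul_assoc]

theorem prod_ofFn_eq_of_forall_ne_eq_one {M : Type*} [Monoid M] :
    ∀ {m : ℕ} (f : Fin m → M) (i : Fin m), (∀ j, j ≠ i → f j = 1) → (ofFn f).prod = f i
  | 0, _, i, _ => i.elim0
  | m + 1, f, i, h => by
    rw [ofFn_succ, prod_cons]
    rcases Fin.eq_zero_or_eq_succ i with rfl | ⟨i, rfl⟩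
    · rw [prod_eq_one fun x hx => ?_, mul_one]
      obtain ⟨j, rfl⟩ := mem_ofFn.mp hx
      exact h _ (Fin.succ_ne_zero j)
    · rw [h 0 (Fin.succ_ne_zero i).symm, one_mul,
        prod_ofFn_eq_of_forall_ne_eq_one (fun j => f j.succ) i
          fun j hj => h _ (by simpa using hj)]

end List

theorem pow_succ_mul_of_mul_eq_add_one {A : Type*} [Ring A] {a b : A} (h : a * b = b * a + 1)
    (m : ℕ) : a ^ (m + 1) * b = b * a ^ (m + 1) + (m + 1) • a ^ m := by
  induction m with
  | zero => simpa using h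
  | succ k ih =>
    calc a ^ (k + 2) * b = a * (a ^ (k + 1) * b) := by rw [← mul_assoc, ← pow_succ']
      _ = (a * b) * a ^ (k + 1) + (k + 1) • a ^ (k + 1) := by
        rw [ih, mul_add, ← mul_assoc, mul_smul_comm, ← pow_succ']
      _ = b * a ^ (k + 2) + (k + 2) • a ^ (k + 1) := by
        rw [h, add_mul, one_mul, mul_assoc, ← pow_succ', add_assoc, ← succ_nsmul']

theorem Derivation.toLinearMap_mul_mulLeft {R A : Type*} [CommSemiring R] [CommSemiring A]
    [Algebra R A] (D : Derivation R A A) (g : A) :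
    (D : Module.End R A) * LinearMap.mulLeft R g =
      LinearMap.mulLeft R g * D + LinearMap.mulLeft R (D g) := by
  ext q
  simp only [Module.End.mul_apply, LinearMap.add_apply, LinearMap.mulLeft_apply,
    Derivation.coeFn_coe, Derivation.leibniz, smul_eq_mul]
  ring

section pderivPow

open MvPolynomial

variable {n : ℕ}

theorem commute_pderiv_toLinearMap (i j : Fin n) :
    Commute ((pderiv i).toLinearMap : Module.End ℂ (MvPolynomial (Fin n) ℂ))
      (pderiv j).toLinearMap :=
  LinearMap.ext fun p => pderiv_comm i j p

theorem pderivPow_add (a b : Fin n →₀ ℕ) :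
    pderivPow n (a + b) = pderivPow n a * pderivPow n b := by
  simp only [pderivPow, Finsupp.add_apply, pow_add]
  exact List.prod_ofFn_mul_of_commute _ _ fun i j => (commute_pderiv_toLinearMap i j).pow_pow _ _

theorem pderivPow_zero : pderivPow n 0 = 1 := by
  simp [pderivPow]

theorem pderivPow_single (i : Fin n) (k : ℕ) :
    pderivPow n (Finsupp.single i k) = (pderiv i).toLinearMap ^ k := by
  rw [pderivPow, List.prod_ofFn_eq_of_forall_ne_eq_one _ i fun j hj => by simp [hj],
    Finsupp.single_eq_same]

theorem commute_mulLeft_pderivPow {g : MvPolynomial (Fin n) ℂ} {β : Fin n →₀ ℕ}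
    (h : ∀ j, β j ≠ 0 → pderiv j g = 0) : Commute (LinearMap.mulLeft ℂ g) (pderivPow n β) := by
  refine Commute.list_prod_right _ _ fun x hx => ?_
  obtain ⟨j, rfl⟩ := List.mem_ofFn.mp hx
  by_cases hj : β j = 0
  · simp [hj]
  · refine Commute.pow_right ?_ _
    have := (pderiv j).toLinearMap_mul_mulLeft g
    rw [h j hj, LinearMap.mulLeft_zero_eq_zero, add_zero] at this
    exact this.symm

theorem pderivPow_mul_X_sub_C (β : Fin n →₀ ℕ) (i : Fin n) (c : ℂ) :
    pderivPow n β * LinearMap.mulLeft ℂ (X i - C c) =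
      LinearMap.mulLeft ℂ (X i - C c) * pderivPow n β +
        β i • pderivPow n (β - Finsupp.single i 1) := by
  set M := LinearMap.mulLeft ℂ (X i - C c)
  have hpderiv : ∀ j, pderiv j (X i - C c) = if i = j then 1 else 0 := by
    simp [pderiv_X, Pi.single_apply]
  have hcomm : Commute M (pderivPow n (β.erase i)) :=
    commute_mulLeft_pderivPow fun j hj => by
      rw [hpderiv, if_neg]; rintro rfl; simp at hj
  have hsplit : pderivPow n β = pderivPow n (β.erase i) * (pderiv i).toLinearMap ^ β i := by
    rw [← pderivPow_single, ← pderivPow_add, Finsupp.erase_add_single]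
  rcases hβ : β i with _ | k
  · rw [Finsupp.erase_of_notMem_support (by simpa using hβ)] at hcomm
    simpa using hcomm.eq.symm
  · have hderiv := (pderiv i).toLinearMap_mul_mulLeft (X i - C c)
    rw [hpderiv, if_pos rfl, LinearMap.mulLeft_one, ← Module.End.one_eq_id] at hderiv
    have hweyl := pow_succ_mul_of_mul_eq_add_one hderiv k
    have hsub : β - Finsupp.single i 1 = β.erase i + Finsupp.single i k := by
      ext j
      rcases eq_or_ne j i with rfl | hj
      · simp [hβ]
      · simp [Finsupp.erase_ne hj, Finsupp.single_eq_of_ne hj]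
    rw [hsplit, hβ, mul_assoc, hweyl, hsub, pderivPow_add, pderivPow_single, mul_add,
      ← mul_assoc, ← hcomm.eq, mul_assoc, mul_smul_comm]

theorem aeval_pderivPow_X_sub_C_mul (ξ : Fin n → ℂ) (β : Fin n →₀ ℕ) (i : Fin n)
    (q : MvPolynomial (Fin n) ℂ) :
    aeval ξ (pderivPow n β ((X i - C (ξ i)) * q)) =
      β i • aeval ξ (pderivPow n (β - Finsupp.single i 1) q) := by
  have h := LinearMap.congr_fun (pderivPow_mul_X_sub_C β i (ξ i)) q
  rw [Module.End.mul_apply, LinearMap.mulLeft_apply] at h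
  simp [h]

end pderivPow

theorem Module.Dual.comp_mulLeft_mem_of_comp_mulLeft_X_mem {σ R : Type*} [CommSemiring R]
    {V : Submodule R (Module.Dual R (MvPolynomial σ R))}
    (hV : ∀ i, ∀ τ ∈ V, τ ∘ₗ LinearMap.mulLeft R (MvPolynomial.X i) ∈ V)
    (p : MvPolynomial σ R) : ∀ τ ∈ V, τ ∘ₗ LinearMap.mulLeft R p ∈ V := by
  induction p using MvPolynomial.induction_on with
  | C a =>
    intro τ hτ
    convert V.smul_mem a hτ using 1
    exact LinearMap.ext fun q => by simp [MvPolynomial.C_mul']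
  | add p q hp hq =>
    intro τ hτ
    convert V.add_mem (hp τ hτ) (hq τ hτ) using 1
    exact LinearMap.ext fun r => by simp [add_mul]
  | mul_X p i hp =>
    intro τ hτ
    convert hp _ (hV i τ hτ) using 1
    exact LinearMap.ext fun r => by simp [mul_left_comm]

section polyExp

open MvPolynomial

variable {n : ℕ}

noncomputable def polyExpLinear (n : ℕ) (ξ : Fin n → ℂ) :
    MvPolynomial (Fin n) ℂ →ₗ[ℂ] Module.Dual ℂ (MvPolynomial (Fin n) ℂ) :=
  Finsupp.linearCombination ℂ (fun β => (aeval ξ).toLinearMap ∘ₗ pderivPow n β) ∘ₗ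
    (AddMonoidAlgebra.coeffLinearEquiv ℂ).toLinearMap

theorem polyExpLinear_apply (ξ : Fin n → ℂ) (ω : MvPolynomial (Fin n) ℂ) :
    polyExpLinear n ξ ω = polyExp n ω ξ :=
  rfl

theorem polyExp_monomial (ξ : Fin n → ℂ) (β : Fin n →₀ ℕ) (c : ℂ) :
    polyExp n (monomial β c) ξ = c • ((aeval ξ).toLinearMap ∘ₗ pderivPow n β) := by
  rw [← polyExpLinear_apply, polyExpLinear, LinearMap.comp_apply, LinearEquiv.coe_coe,
    ← single_eq_monomial, AddMonoidAlgebra.coeffLinearEquiv_apply, AddMonoidAlgebra.coeff_single,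
    Finsupp.linearCombination_single]

theorem polyExp_one (ξ : Fin n → ℂ) : polyExp n 1 ξ = (aeval ξ).toLinearMap := by
  rw [← C_1, C_apply, polyExp_monomial, pderivPow_zero, one_smul]
  rfl

theorem polyExp_pderiv (ξ : Fin n → ℂ) (i : Fin n) (ω : MvPolynomial (Fin n) ℂ) :
    polyExp n (pderiv i ω) ξ = polyExp n ω ξ ∘ₗ LinearMap.mulLeft ℂ (X i - C (ξ i)) := by
  induction ω using MvPolynomial.induction_on' with
  | add f g hf hg =>
    simp only [← polyExpLinear_apply, map_add, LinearMap.add_comp] at hf hg ⊢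
    rw [hf, hg]
  | monomial β c =>
    refine LinearMap.ext fun q => ?_
    rw [pderiv_monomial, polyExp_monomial, polyExp_monomial]
    simp only [LinearMap.smul_apply, LinearMap.comp_apply, AlgHom.toLinearMap_apply,
      LinearMap.mulLeft_apply, aeval_pderivPow_X_sub_C_mul, smul_eq_mul, nsmul_eq_mul]
    ring

theorem polyExp_comp_mulLeft_X (ξ : Fin n → ℂ) (i : Fin n) (ω : MvPolynomial (Fin n) ℂ) :
    polyExp n ω ξ ∘ₗ LinearMap.mulLeft ℂ (X i) = polyExp n (pderiv i ω + ξ i • ω) ξ := by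
  simp only [← polyExpLinear_apply, map_add, map_smul]
  rw [polyExpLinear_apply ξ (pderiv i ω), polyExp_pderiv, polyExpLinear_apply]
  refine LinearMap.ext fun q => ?_
  simp [sub_mul, C_mul']

end polyExp

section Hankel

open MvPolynomial LinearMap

variable {n : ℕ}

theorem Hankel_apply (σ : Module.Dual ℂ (MvPolynomial (Fin n) ℂ)) (p : MvPolynomial (Fin n) ℂ) :
    Hankel n σ p = σ ∘ₗ mulLeft ℂ p :=
  rfl

theorem self_mem_range_Hankel (σ : Module.Dual ℂ (MvPolynomial (Fin n) ℂ)) :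
    σ ∈ range (Hankel n σ) :=
  ⟨1, LinearMap.ext fun q => by simp [Hankel_apply]⟩

theorem comp_mulLeft_mem_range_Hankel {σ τ : Module.Dual ℂ (MvPolynomial (Fin n) ℂ)}
    (hτ : τ ∈ range (Hankel n σ)) (p : MvPolynomial (Fin n) ℂ) :
    τ ∘ₗ mulLeft ℂ p ∈ range (Hankel n σ) := by
  obtain ⟨r, rfl⟩ := hτ
  exact ⟨r * p, LinearMap.ext fun q => by simp [Hankel_apply]⟩

theorem range_Hankel_polyExp_le (ω : MvPolynomial (Fin n) ℂ) (ξ : Fin n → ℂ) :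
    range (Hankel n (polyExp n ω ξ)) ≤ range (polyExpLinear n ξ) := by
  rintro _ ⟨p, rfl⟩
  refine Module.Dual.comp_mulLeft_mem_of_comp_mulLeft_X_mem (fun i τ hτ => ?_) p _ ⟨ω, rfl⟩
  obtain ⟨ω', rfl⟩ := hτ
  exact ⟨_, (polyExp_comp_mulLeft_X ξ i ω').symm⟩

theorem aeval_mem_range_Hankel {σ : Module.Dual ℂ (MvPolynomial (Fin n) ℂ)} (hσ : σ ≠ 0)
    {ω : MvPolynomial (Fin n) ℂ} {ξ : Fin n → ℂ}
    (h : range (Hankel n σ) ≤ range (Hankel n (polyExp n ω ξ))) :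
    (aeval ξ).toLinearMap ∈ range (Hankel n σ) := by
  obtain ⟨ω', hω'⟩ := range_Hankel_polyExp_le ω ξ (h (self_mem_range_Hankel σ))
  let S := (range (Hankel n σ)).comap (polyExpLinear n ξ)
  have hS : ∀ i, ∀ p ∈ S, pderiv i p ∈ S := fun i p hp => by
    simpa [S, polyExpLinear_apply, polyExp_pderiv] using
      comp_mulLeft_mem_range_Hankel hp (X i - C (ξ i))
  have hω'S : ω' ∈ S := Submodule.mem_comap.mpr (hω' ▸ self_mem_range_Hankel σ)
  have hω'0 : ω' ≠ 0 := by rintro rfl; exact hσ (by simpa using hω'.symm)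
  simpa [S, polyExpLinear_apply, polyExp_one] using one_mem_of_forall_pderiv_mem hS hω'S hω'0

end Hankel

theorem stmt6_general (n : ℕ) (ω : MvPolynomial (Fin n) ℂ) (ξ : Fin n → ℂ) :
    ¬ ∃ σ₁ σ₂ : Module.Dual ℂ (MvPolynomial (Fin n) ℂ),
        polyExp n ω ξ = σ₁ + σ₂ ∧ σ₁ ≠ 0 ∧ σ₂ ≠ 0 ∧
        LinearMap.range (Hankel n (polyExp n ω ξ)) =
          LinearMap.range (Hankel n σ₁) ⊔ LinearMap.range (Hankel n σ₂) ∧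
        LinearMap.range (Hankel n σ₁) ⊓ LinearMap.range (Hankel n σ₂) = ⊥ := by
  rintro ⟨σ₁, σ₂, -, h₁, h₂, hsup, hinf⟩
  have hmem : (MvPolynomial.aeval ξ).toLinearMap ∈
      LinearMap.range (Hankel n σ₁) ⊓ LinearMap.range (Hankel n σ₂) :=
    ⟨aeval_mem_range_Hankel h₁ (hsup ▸ le_sup_left),
      aeval_mem_range_Hankel h₂ (hsup ▸ le_sup_right)⟩
  rw [hinf, Submodule.mem_bot] at hmem
  exact one_ne_zero (α := ℂ) (by simpa using LinearMap.congr_fun hmem 1)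

/-- `ω(y) e_ξ(y)` with `ω ≠ 0` is indecomposable: it cannot be written as
`σ₁ + σ₂` with both summands nonzero and `Im H_σ = Im H_{σ₁} ⊕ Im H_{σ₂}`. -/
theorem stmt6 (n : ℕ) (ω : MvPolynomial (Fin n) ℂ) (hω : ω ≠ 0) (ξ : Fin n → ℂ) :
    ¬ ∃ σ₁ σ₂ : Module.Dual ℂ (MvPolynomial (Fin n) ℂ),
        polyExp n ω ξ = σ₁ + σ₂ ∧ σ₁ ≠ 0 ∧ σ₂ ≠ 0 ∧
        LinearMap.range (Hankel n (polyExp n ω ξ)) =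
          LinearMap.range (Hankel n σ₁) ⊔ LinearMap.range (Hankel n σ₂) ∧
        LinearMap.range (Hankel n σ₁) ⊓ LinearMap.range (Hankel n σ₂) = ⊥ :=
  stmt6_general n ω ξ
end

section
/- Let I be an ideal of ℂ[x] with A = ℂ[x]/I Artinian and V(I) = {ξ₁,…,ξ_{r'}}. For any g ∈ ℂ[x], the eigenvalues of the multiplication operator M_g : A → A, h ↦ gh, are exactly the values g(ξ₁),…,g(ξ_{r'}), with the eigenvalue g(ξ_i) occurring with algebraic multiplicity μ_i = dim A_i, where A_i = ℂ[x]/Q_i and Q_i is the primary component of I at ξ_i. -/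
/-!
Let `R = ℂ[x]`, let `𝔪ⱼ = ker (eval ξⱼ)` be the maximal radical of `Qⱼ`, and put `b = g - μ`.
Since each `Qⱼ` is primary, an element of `A` is killed by a power of `b` exactly when it lies in
the image of `J = ⋂_{b ∉ 𝔪ⱼ} Qⱼ`; this image is the generalized `μ`-eigenspace of `M_g`. The
ideal `J` is comaximal with `K = ⋂_{b ∈ 𝔪ⱼ} Qⱼ` and `I = J ∩ K`, so by the Chinese remainder
theorem the image of `J` in `R ⧸ I` is isomorphic to `R ⧸ K`. Thus `μ` is an eigenvalue iff
`K ≠ R`, i.e. iff `μ = g(ξⱼ)` for some `j`, and if the values `g(ξⱼ)` are distinct then `K = Qᵢ`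
for `μ = g(ξᵢ)`.
-/

namespace Ideal

variable {R : Type*} [CommRing R]

theorem IsPrimary.mem_of_pow_mul_mem {Q : Ideal R} (hQ : Q.IsPrimary) {b r : R} {n : ℕ}
    (hb : b ∉ Q.radical) (h : b ^ n * r ∈ Q) : r ∈ Q := by
  rw [mul_comm] at h
  exact (isPrimary_iff.mp hQ).2 h |>.resolve_right fun hbn => hb (mem_radical_of_pow_mem hbn)

theorem isCoprime_of_isMaximal_radical {I J : Ideal R} [I.radical.IsMaximal]
    [J.radical.IsMaximal] (h : I.radical ≠ J.radical) : IsCoprime I J := by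
  rw [isCoprime_iff_sup_eq, ← radical_eq_top, radical_sup,
    (isCoprime_of_isMaximal h).sup_eq, radical_top]

theorem isCoprime_iInf_right {ι : Sort*} [Finite ι] {I : Ideal R} {J : ι → Ideal R}
    (h : ∀ i, IsCoprime I (J i)) : IsCoprime I (⨅ i, J i) := by
  have := Fintype.ofFinite (PLift ι)
  rw [← iInf_plift_down]
  simpa only [Finset.mem_univ, iInf_true] using
    isCoprime_biInf (s := Finset.univ) fun i _ => h (PLift.down i)

variable {ι : Type*} [Finite ι] {Q : ι → Ideal R}

theorem exists_pow_mul_mem_iInf_iff (hQ : ∀ i, (Q i).IsPrimary) (b r : R) :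
    (∃ n, b ^ n * r ∈ ⨅ i, Q i) ↔ r ∈ ⨅ (i) (_ : b ∉ (Q i).radical), Q i := by
  simp only [mem_iInf]
  refine ⟨fun ⟨n, h⟩ i hb => (hQ i).mem_of_pow_mul_mem hb (h i), fun h => ?_⟩
  choose! m hm using fun i (hb : b ∈ (Q i).radical) => hb
  obtain ⟨n, hn⟩ := Finite.exists_le m
  refine ⟨n, fun i => ?_⟩
  by_cases hb : b ∈ (Q i).radical
  · exact mul_mem_right _ _ ((Q i).pow_mem_of_pow_mem (hm i hb) (hn i))
  · exact mul_mem_left _ _ (h i hb)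

theorem isCoprime_iInf_notMem_radical (hQ : ∀ i, (Q i).radical.IsMaximal) (b : R) :
    IsCoprime (⨅ (i) (_ : b ∉ (Q i).radical), Q i) (⨅ (j) (_ : b ∈ (Q j).radical), Q j) :=
  isCoprime_iInf_right fun j => isCoprime_iInf_right fun hj =>
    (isCoprime_iInf_right fun i => isCoprime_iInf_right fun hi =>
      have := hQ i; have := hQ j
      isCoprime_of_isMaximal_radical fun h => hi (h ▸ hj)).symm

noncomputable def mapQuotientEquivOfIsCoprime (k : Type*) [CommRing k] [Algebra k R]
    {I J K : Ideal R} (hJK : IsCoprime J K) (hI : J ⊓ K = I) :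
    (J.map (Quotient.mk I)).restrictScalars k ≃ₗ[k] R ⧸ K :=
  LinearEquiv.ofBijective
    ((Quotient.factorₐ k (hI ▸ inf_le_right : I ≤ K)).toLinearMap ∘ₗ Submodule.subtype _) <| by
    subst hI
    have mem_map (x) : x ∈ J.map (Quotient.mk (J ⊓ K)) ↔ ∃ r ∈ J, Quotient.mk _ r = x :=
      mem_map_iff_of_surjective _ Quotient.mk_surjective
    constructor
    · rw [injective_iff_map_eq_zero]
      rintro ⟨x, hx⟩ hx0
      obtain ⟨r, hr, rfl⟩ := (mem_map x).mp hx
      exact Subtype.ext (Quotient.eq_zero_iff_mem.mpr ⟨hr, Quotient.eq_zero_iff_mem.mp hx0⟩)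
    · obtain ⟨j, hj, c, hc, hjc⟩ := hJK.exists
      intro y
      obtain ⟨q, rfl⟩ := Quotient.mk_surjective y
      refine ⟨⟨Quotient.mk _ (q * j), (mem_map _).mpr ⟨q * j, mul_mem_left _ _ hj, rfl⟩⟩, ?_⟩
      show Quotient.mk K (q * j) = Quotient.mk K q
      rw [Quotient.eq, show q * j - q = -q * c by linear_combination q * hjc]
      exact mul_mem_left _ _ hc

end Ideal

open Module End

namespace LinearMap

variable {k A : Type*} [CommRing k] [CommRing A] [Algebra k A]

theorem mulLeft_sub_smul_one (a : A) (μ : k) :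
    mulLeft k a - μ • 1 = mulLeft k (a - algebraMap k A μ) := by
  ext x
  simp [sub_mul, Algebra.smul_def]

theorem mem_maxGenEigenspace_mulLeft {a : A} {μ : k} {x : A} :
    x ∈ maxGenEigenspace (mulLeft k a) μ ↔ ∃ n : ℕ, (a - algebraMap k A μ) ^ n * x = 0 := by
  simp [mulLeft_sub_smul_one, pow_mulLeft]

end LinearMap

section QuotientIInf

variable {k R ι : Type*} [CommRing k] [CommRing R] [Algebra k R] [Finite ι]
  {Q : ι → Ideal R}

theorem maxGenEigenspace_mulLeft_quotient_iInf (hQ : ∀ i, (Q i).IsPrimary) (a : R) (μ : k) :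
    maxGenEigenspace (LinearMap.mulLeft k (Ideal.Quotient.mk (⨅ i, Q i) a)) μ =
      ((⨅ (i) (_ : a - algebraMap k R μ ∉ (Q i).radical), Q i).map
        (Ideal.Quotient.mk _)).restrictScalars k := by
  ext x
  obtain ⟨r, rfl⟩ := Ideal.Quotient.mk_surjective x
  rw [LinearMap.mem_maxGenEigenspace_mulLeft, Submodule.restrictScalars_mem,
    Ideal.mem_quotient_iff_mem (le_iInf₂ fun i _ => iInf_le Q i), ← Ideal.Quotient.mk_algebraMap]
  simp only [← map_sub, ← map_pow, ← map_mul, Ideal.Quotient.eq_zero_iff_mem]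
  exact Ideal.exists_pow_mul_mem_iInf_iff hQ _ r

noncomputable def maxGenEigenspaceMulLeftQuotientEquiv (hQ : ∀ i, (Q i).IsPrimary)
    (hmax : ∀ i, (Q i).radical.IsMaximal) (a : R) (μ : k) :
    maxGenEigenspace (LinearMap.mulLeft k (Ideal.Quotient.mk (⨅ i, Q i) a)) μ ≃ₗ[k]
      R ⧸ ⨅ (i) (_ : a - algebraMap k R μ ∈ (Q i).radical), Q i :=
  (LinearEquiv.ofEq _ _ (maxGenEigenspace_mulLeft_quotient_iInf hQ a μ)).trans
    (Ideal.mapQuotientEquivOfIsCoprime k (Ideal.isCoprime_iInf_notMem_radical hmax _)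
      (by rw [inf_comm]; exact (iInf_split Q _).symm))

theorem hasEigenvalue_mulLeft_quotient_iInf_iff (hQ : ∀ i, (Q i).IsPrimary)
    (hmax : ∀ i, (Q i).radical.IsMaximal) (a : R) (μ : k) :
    HasEigenvalue (LinearMap.mulLeft k (Ideal.Quotient.mk (⨅ i, Q i) a)) μ ↔
      ∃ i, a - algebraMap k R μ ∈ (Q i).radical := by
  rw [HasEigenvalue, ← hasUnifEigenvalue_iff_hasUnifEigenvalue_one (k := ⊤) (by simp),
    HasUnifEigenvalue, ← Submodule.nontrivial_iff_ne_bot,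
    (maxGenEigenspaceMulLeftQuotientEquiv hQ hmax a μ).toEquiv.nontrivial_congr,
    Ideal.Quotient.nontrivial_iff]
  simp only [ne_eq, iInf_eq_top, not_forall, exists_prop]
  exact exists_congr fun i => and_iff_left (hQ i).ne_top

end QuotientIInf

open MvPolynomial in
theorem stmt8_general (n r' : ℕ) (I : Ideal (MvPolynomial (Fin n) ℂ))
    (ξ : Fin r' → (Fin n → ℂ))
    (Q : Fin r' → Ideal (MvPolynomial (Fin n) ℂ))
    (hQ : ∀ i, (Q i).IsPrimary)
    (hQrad : ∀ i, (Q i).radical = RingHom.ker (MvPolynomial.eval (ξ i)))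
    (hI : I = ⨅ i, Q i)
    (g : MvPolynomial (Fin n) ℂ) :
    (∀ μ : ℂ,
        Module.End.HasEigenvalue
          (LinearMap.mulLeft ℂ (Ideal.Quotient.mk I g)) μ ↔
        ∃ i, μ = MvPolynomial.eval (ξ i) g) ∧
    ((Function.Injective fun i => MvPolynomial.eval (ξ i) g) →
      ∀ i, Module.finrank ℂ
          ↥(Module.End.maxGenEigenspace
              (LinearMap.mulLeft ℂ (Ideal.Quotient.mk I g))
              (MvPolynomial.eval (ξ i) g)) =
        Module.finrank ℂ (MvPolynomial (Fin n) ℂ ⧸ Q i)) := by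
  subst hI
  have hmax (i) : (Q i).radical.IsMaximal :=
    hQrad i ▸ RingHom.ker_isMaximal_of_surjective _ fun c => ⟨C c, eval_C c⟩
  have hroot (μ : ℂ) (j) : g - algebraMap ℂ _ μ ∈ (Q j).radical ↔ μ = eval (ξ j) g := by
    rw [hQrad, RingHom.mem_ker, map_sub, algebraMap_eq, eval_C, sub_eq_zero, eq_comm]
  refine ⟨fun μ => by simp only [hasEigenvalue_mulLeft_quotient_iInf_iff hQ hmax, hroot],
    fun hinj i => ?_⟩
  have hQi : ⨅ (j) (_ : g - algebraMap ℂ _ (eval (ξ i) g) ∈ (Q j).radical), Q j = Q i := by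
    simp only [hroot, hinj.eq_iff, iInf_iInf_eq_right]
  rw [(maxGenEigenspaceMulLeftQuotientEquiv hQ hmax g _).finrank_eq, hQi]

/-- Eigenvalues of the multiplication operator `M_g` on `A = ℂ[x]/I` for an
Artinian quotient with roots `V(I) = {ξ₁,…,ξ_{r'}}`: they are the values `g(ξᵢ)`,
with algebraic multiplicity `dim ℂ[x]/Qᵢ` where `Qᵢ` is the primary component of
`I` at `ξᵢ` (when the values `g(ξᵢ)` are distinct). -/
theorem stmt8 (n r' : ℕ) (I : Ideal (MvPolynomial (Fin n) ℂ))
    [Module.Finite ℂ (MvPolynomial (Fin n) ℂ ⧸ I)]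
    (ξ : Fin r' → (Fin n → ℂ)) (hξ : Function.Injective ξ)
    (hV : {x : Fin n → ℂ | ∀ p ∈ I, MvPolynomial.eval x p = 0} = Set.range ξ)
    (Q : Fin r' → Ideal (MvPolynomial (Fin n) ℂ))
    (hQ : ∀ i, (Q i).IsPrimary)
    (hQrad : ∀ i, (Q i).radical = RingHom.ker (MvPolynomial.eval (ξ i)))
    (hI : I = ⨅ i, Q i)
    (g : MvPolynomial (Fin n) ℂ) :
    (∀ μ : ℂ,
        Module.End.HasEigenvalue
          (LinearMap.mulLeft ℂ (Ideal.Quotient.mk I g)) μ ↔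
        ∃ i, μ = MvPolynomial.eval (ξ i) g) ∧
    ((Function.Injective fun i => MvPolynomial.eval (ξ i) g) →
      ∀ i, Module.finrank ℂ
          ↥(Module.End.maxGenEigenspace
              (LinearMap.mulLeft ℂ (Ideal.Quotient.mk I g))
              (MvPolynomial.eval (ξ i) g)) =
        Module.finrank ℂ (MvPolynomial (Fin n) ℂ ⧸ Q i)) :=
  stmt8_general n r' I ξ Q hQ hQrad hI g
end

section
/- Let I be an ideal of ℂ[x] with A = ℂ[x]/I Artinian and roots V(I) = {ξ₁,…,ξ_{r'}}. The common eigenvectors of the transposed multiplication operators M_g^T : A* → A*, Λ ↦ Λ∘M_g, for all g ∈ ℂ[x], are, up to scalar, exactly the evaluation functionals e_{ξ₁},…,e_{ξ_{r'}}, and M_g^T(e_{ξ_i}) = g(ξ_i) e_{ξ_i}. -/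
/-- The common eigenvectors of the transposed multiplication operators `M_g^T` on
`A* = (ℂ[x]/I)*` are, up to scalar, the evaluation functionals `e_{ξᵢ}` at the
roots of `I`, and `M_g^T(e_{ξᵢ}) = g(ξᵢ) e_{ξᵢ}`. -/
theorem stmt9 (n r' : ℕ) (I : Ideal (MvPolynomial (Fin n) ℂ))
    [Module.Finite ℂ (MvPolynomial (Fin n) ℂ ⧸ I)]
    (ξ : Fin r' → (Fin n → ℂ)) (hξ : Function.Injective ξ)
    (hV : {x : Fin n → ℂ | ∀ p ∈ I, MvPolynomial.eval x p = 0} = Set.range ξ)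
    (E : Fin r' → Module.Dual ℂ (MvPolynomial (Fin n) ℂ ⧸ I))
    (hE : ∀ i p, E i (Ideal.Quotient.mk I p) = MvPolynomial.eval (ξ i) p) :
    (∀ (g : MvPolynomial (Fin n) ℂ) i,
        (LinearMap.mulLeft ℂ (Ideal.Quotient.mk I g)).dualMap (E i) =
          MvPolynomial.eval (ξ i) g • E i) ∧
    (∀ Λ : Module.Dual ℂ (MvPolynomial (Fin n) ℂ ⧸ I), Λ ≠ 0 →
      ((∀ g : MvPolynomial (Fin n) ℂ, ∃ c : ℂ,
          (LinearMap.mulLeft ℂ (Ideal.Quotient.mk I g)).dualMap Λ = c • Λ) ↔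
        ∃ i, ∃ c : ℂ, c ≠ 0 ∧ Λ = c • E i)) := by
  set Q := Ideal.Quotient.mk I with hQ
  have part1 : ∀ (g : MvPolynomial (Fin n) ℂ) i,
      (LinearMap.mulLeft ℂ (Q g)).dualMap (E i) = MvPolynomial.eval (ξ i) g • E i := by
    intro g i
    apply LinearMap.ext
    intro a
    obtain ⟨p, rfl⟩ := Ideal.Quotient.mk_surjective a
    show E i (Q g * Q p) = MvPolynomial.eval (ξ i) g * E i (Q p)
    rw [← map_mul, hE, hE, map_mul]
  refine ⟨part1, ?_⟩
  intro Λ hΛ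
  constructor
  · intro h
    -- key multiplicativity
    have key : ∀ p q : MvPolynomial (Fin n) ℂ,
        Λ (Q (p * q)) * Λ (Q 1) = Λ (Q p) * Λ (Q q) := by
      intro p q
      obtain ⟨c, hc⟩ := h p
      have h1 := congrArg (fun f => f (Q 1)) hc
      have h2 := congrArg (fun f => f (Q q)) hc
      simp only [LinearMap.dualMap_apply', LinearMap.comp_apply, LinearMap.mulLeft_apply,
        LinearMap.smul_apply, smul_eq_mul] at h1 h2
      rw [← map_mul, mul_one] at h1
      rw [← map_mul] at h2
      rw [h2, h1]
      ring
    have h1ne : Λ (Q 1) ≠ 0 := by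
      intro h0
      apply hΛ
      apply LinearMap.ext
      intro a
      obtain ⟨p, rfl⟩ := Ideal.Quotient.mk_surjective a
      obtain ⟨c, hc⟩ := h p
      have h1 := congrArg (fun f => f (Q 1)) hc
      simp only [LinearMap.dualMap_apply', LinearMap.comp_apply, LinearMap.mulLeft_apply,
        LinearMap.smul_apply, smul_eq_mul] at h1
      rw [← map_mul, mul_one] at h1
      show Λ (Q p) = 0
      rw [h1, h0, mul_zero]
    set x : Fin n → ℂ := fun j => Λ (Q (MvPolynomial.X j)) / Λ (Q 1) with hx
    have heval : ∀ p : MvPolynomial (Fin n) ℂ,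
        MvPolynomial.eval x p * Λ (Q 1) = Λ (Q p) := by
      intro p
      induction p using MvPolynomial.induction_on with
      | C a =>
          have hca : Q (MvPolynomial.C a) = algebraMap ℂ _ a := rfl
          rw [MvPolynomial.eval_C, hca, Algebra.algebraMap_eq_smul_one, map_smul,
            smul_eq_mul, map_one]
      | add p q hp hq =>
          rw [map_add, map_add, map_add, add_mul, hp, hq]
      | mul_X p j hp =>
          have hxj : x j * Λ (Q 1) = Λ (Q (MvPolynomial.X j)) :=
            div_mul_cancel₀ _ h1ne
          apply mul_right_cancel₀ h1ne
          rw [key p (MvPolynomial.X j), MvPolynomial.eval_mul, MvPolynomial.eval_X,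
            ← hp, ← hxj]
          ring
    have hxV : x ∈ {y : Fin n → ℂ | ∀ p ∈ I, MvPolynomial.eval y p = 0} := by
      intro p hp
      have hQp : Q p = 0 := Ideal.Quotient.eq_zero_iff_mem.mpr hp
      have := heval p
      rw [hQp, map_zero] at this
      rcases mul_eq_zero.mp this with h' | h'
      · exact h'
      · exact absurd h' h1ne
    rw [hV] at hxV
    obtain ⟨i, hi⟩ := hxV
    refine ⟨i, Λ (Q 1), h1ne, ?_⟩
    apply LinearMap.ext
    intro a
    obtain ⟨p, rfl⟩ := Ideal.Quotient.mk_surjective a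
    show Λ (Q p) = Λ (Q 1) • E i (Q p)
    rw [smul_eq_mul, hE, hi, ← heval p]
    ring
  · rintro ⟨i, c, hc, rfl⟩ g
    refine ⟨MvPolynomial.eval (ξ i) g, ?_⟩
    rw [LinearMap.map_smul, part1 g i, smul_comm]
end

section
/- Let σ ∈ ℂ[[y]] with A_σ = ℂ[x]/I_σ of finite dimension r, let B, B' be bases of A_σ represented by polynomials, and let g ∈ ℂ[x]. Then H_{g⋆σ}^{B,B'} = (M_g^B)^T · H_σ^{B,B'} = H_σ^{B,B'} · M_g^{B'}, where M_g^B (resp. M_g^{B'}) is the matrix of multiplication by g in A_σ in basis B (resp. B'). -/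
/-!
Since `I_σ` is contained in `ker σ`, the value `σ (p * s)` depends only on the class of `p` in
`A_σ`. Writing `g bᵢ = ∑ₖ (M_g^B)ₖᵢ bₖ` in `A_σ` and lifting to representatives therefore gives
`σ (g Bᵢ B'ⱼ) = ∑ₖ (M_g^B)ₖᵢ σ (Bₖ B'ⱼ)`, which is the first identity; the second is the same
computation with the roles of `B` and `B'` exchanged, using commutativity.
-/

open Matrix

section HankelMatrix

variable {K R ι : Type*} [CommRing K] [CommRing R] [Algebra K R] [Fintype ι] [DecidableEq ι]
  {I : Ideal R} {σ : R →ₗ[K] K}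

theorem Ideal.Quotient.mk_mul_eq_sum_toMatrix_mulLeft (b : Module.Basis ι K (R ⧸ I))
    {B : ι → R} (hb : ∀ i, b i = Ideal.Quotient.mk I (B i)) (g : R) (i : ι) :
    Ideal.Quotient.mk I (g * B i) = Ideal.Quotient.mk I
      (∑ k, LinearMap.toMatrix b b (LinearMap.mulLeft K (Ideal.Quotient.mk I g)) k i • B k) := by
  have hexpand := Matrix.toLin_self b b
    (LinearMap.toMatrix b b (LinearMap.mulLeft K (Ideal.Quotient.mk I g))) i
  rw [Matrix.toLin_toMatrix, LinearMap.mulLeft_apply, hb i] at hexpand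
  rw [map_mul, hexpand, ← Ideal.Quotient.mkₐ_eq_mk K, map_sum]
  simp only [map_smul, Ideal.Quotient.mkₐ_eq_mk, hb]

theorem LinearMap.map_mul_eq_of_mk_eq (hσ : ∀ p ∈ I, σ p = 0) {p q : R}
    (hpq : Ideal.Quotient.mk I p = Ideal.Quotient.mk I q) (s : R) :
    σ (p * s) = σ (q * s) := by
  have hmem : (p - q) * s ∈ I := I.mul_mem_right s (Ideal.Quotient.eq.mp hpq)
  rw [← sub_eq_zero, ← map_sub, ← sub_mul]
  exact hσ _ hmem

theorem LinearMap.map_mul_basis_eq_sum_toMatrix_mulLeft (hσ : ∀ p ∈ I, σ p = 0)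
    (b : Module.Basis ι K (R ⧸ I)) {B : ι → R} (hb : ∀ i, b i = Ideal.Quotient.mk I (B i))
    (g : R) (i : ι) (s : R) :
    σ (g * B i * s) = ∑ k,
      LinearMap.toMatrix b b (LinearMap.mulLeft K (Ideal.Quotient.mk I g)) k i * σ (B k * s) := by
  rw [σ.map_mul_eq_of_mk_eq hσ (Ideal.Quotient.mk_mul_eq_sum_toMatrix_mulLeft b hb g i),
    Finset.sum_mul, map_sum]
  simp only [smul_mul_assoc, map_smul, smul_eq_mul]

theorem hankel_map_mul_eq_transpose_toMatrix_mulLeft_mul (hσ : ∀ p ∈ I, σ p = 0)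
    (b : Module.Basis ι K (R ⧸ I)) {B : ι → R} (hb : ∀ i, b i = Ideal.Quotient.mk I (B i))
    (B' : ι → R) (g : R) :
    (of fun i j => σ (g * (B i * B' j))) =
      (LinearMap.toMatrix b b (LinearMap.mulLeft K (Ideal.Quotient.mk I g)))ᵀ *
        of fun i j => σ (B i * B' j) := by
  ext i j
  simp only [of_apply, mul_apply, transpose_apply, ← mul_assoc,
    σ.map_mul_basis_eq_sum_toMatrix_mulLeft hσ b hb]

theorem hankel_map_mul_eq_mul_toMatrix_mulLeft (hσ : ∀ p ∈ I, σ p = 0) (B : ι → R)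
    (b' : Module.Basis ι K (R ⧸ I)) {B' : ι → R} (hb' : ∀ i, b' i = Ideal.Quotient.mk I (B' i))
    (g : R) :
    (of fun i j => σ (g * (B i * B' j))) =
      (of fun i j => σ (B i * B' j)) *
        LinearMap.toMatrix b' b' (LinearMap.mulLeft K (Ideal.Quotient.mk I g)) := by
  ext i j
  rw [of_apply, mul_apply, mul_comm (B i), ← mul_assoc,
    σ.map_mul_basis_eq_sum_toMatrix_mulLeft hσ b' hb']
  simp only [of_apply, mul_comm (B' _) (B i), mul_comm _ (σ _)]

end HankelMatrix

theorem map_eq_zero_of_mem_Iσ {n : ℕ} {σ : Module.Dual ℂ (MvPolynomial (Fin n) ℂ)} :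
    ∀ p ∈ Iσ n σ, σ p = 0 := fun p hp => by
  simpa using hp 1

/-- `H_{g⋆σ}^{B,B'} = (M_g^B)ᵀ · H_σ^{B,B'} = H_σ^{B,B'} · M_g^{B'}`, where `B`,
`B'` are bases of `A_σ` represented by polynomials and `M_g^B` is the matrix of
multiplication by `g` in basis `B` (columns = coordinates of `g·bᵢ`). -/
theorem stmt13 (n r : ℕ) (σ : Module.Dual ℂ (MvPolynomial (Fin n) ℂ))
    (g : MvPolynomial (Fin n) ℂ)
    (B B' : Fin r → MvPolynomial (Fin n) ℂ)
    (b b' : Module.Basis (Fin r) ℂ (MvPolynomial (Fin n) ℂ ⧸ Iσ n σ))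
    (hb : ∀ i, b i = Ideal.Quotient.mk (Iσ n σ) (B i))
    (hb' : ∀ i, b' i = Ideal.Quotient.mk (Iσ n σ) (B' i)) :
    (Matrix.of fun i j : Fin r => σ (g * (B i * B' j))) =
      Matrix.transpose (LinearMap.toMatrix b b
          (LinearMap.mulLeft ℂ (Ideal.Quotient.mk (Iσ n σ) g))) *
        (Matrix.of fun i j : Fin r => σ (B i * B' j)) ∧
    (Matrix.of fun i j : Fin r => σ (g * (B i * B' j))) =
      (Matrix.of fun i j : Fin r => σ (B i * B' j)) *
        LinearMap.toMatrix b' b'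
          (LinearMap.mulLeft ℂ (Ideal.Quotient.mk (Iσ n σ) g)) :=
  ⟨hankel_map_mul_eq_transpose_toMatrix_mulLeft_mul map_eq_zero_of_mem_Iσ b hb B' g,
    hankel_map_mul_eq_mul_toMatrix_mulLeft map_eq_zero_of_mem_Iσ B b' hb' g⟩
end

section
/- Let σ = Σ_{i=1}^{r'} ω_i e_{ξ_i} with pairwise distinct ξ_i and nonzero ω_i ∈ ℂ[y]. Then the points ξ₁,…,ξ_{r'} are exactly the common roots of the polynomials in I_σ = ker H_σ = { p ∈ ℂ[x] : ∀q, ⟨σ | pq⟩ = 0 }, i.e. V(I_σ) = {ξ₁,…,ξ_{r'}}. -/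
/-! Writing `p(x + ξ) = Σ_β c_β x^β`, Taylor's formula `(∂^β p)(ξ) = β! c_β` shows that
`ω e_ξ` only sees the Taylor coefficients of `p` at `ξ` whose exponents lie in the support of `ω`.
Hence `ω e_ξ` kills every multiple of `(x_k - ξ_k)^E` once `E > deg_{x_k} ω`. A product of such
powers, one for each `ξ_j ≠ x`, does not vanish at `x` and is killed by the corresponding terms
of `σ`: for `x ∉ {ξ_j}` it lies in `I_σ`, and for `x = ξ_i` and `p ∈ I_σ` it leaves
`ω_i e_{ξ_i}` annihilating all multiples of `g = p u`, where `u(ξ_i) ≠ 0`.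
Finally, if `ω e_ξ` annihilates all multiples of `g`, testing against `(x - ξ)^{β₀}` for a
maximal exponent `β₀` of `ω` isolates the single term `ω_{β₀} β₀! g(ξ)`, so `g(ξ) = 0`. -/

open MvPolynomial

section Translation

variable {n : ℕ}

noncomputable def taylorShift (ξ : Fin n → ℂ) :
    MvPolynomial (Fin n) ℂ →ₐ[ℂ] MvPolynomial (Fin n) ℂ :=
  aeval fun i => X i + C (ξ i)

lemma taylorShift_X_sub_C (ξ : Fin n → ℂ) (k : Fin n) :
    taylorShift ξ (X k - C (ξ k)) = X k := by
  simp [taylorShift]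

lemma taylorShift_aeval_X_sub_C (ξ : Fin n → ℂ) (p : MvPolynomial (Fin n) ℂ) :
    taylorShift ξ (aeval (fun i => X i - C (ξ i)) p) = p := by
  rw [← AlgHom.comp_apply, comp_aeval]
  simp only [taylorShift_X_sub_C, aeval_X_left, AlgHom.id_apply]

lemma constantCoeff_taylorShift (ξ : Fin n → ℂ) (p : MvPolynomial (Fin n) ℂ) :
    constantCoeff (taylorShift ξ p) = eval ξ p := by
  rw [← eval_zero, ← coe_aeval_eq_eval, RingHom.coe_coe, taylorShift, ← AlgHom.comp_apply,
    comp_aeval]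
  simp

lemma pderiv_taylorShift (ξ : Fin n → ℂ) (k : Fin n) (p : MvPolynomial (Fin n) ℂ) :
    pderiv k (taylorShift ξ p) = taylorShift ξ (pderiv k p) := by
  induction p using MvPolynomial.induction_on with
  | C a => simp [taylorShift]
  | add p q hp hq => simp [hp, hq]
  | mul_X p i hp =>
    rcases eq_or_ne i k with rfl | hik
    · simp_all [taylorShift]
    · simp_all [taylorShift, pderiv_X_of_ne hik]

lemma commute_pderiv_taylorShift (ξ : Fin n → ℂ) (k : Fin n) :
    Commute ((pderiv k).toLinearMap : Module.End ℂ (MvPolynomial (Fin n) ℂ))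
      (taylorShift ξ).toLinearMap :=
  LinearMap.ext (pderiv_taylorShift ξ k)

lemma pderivPow_taylorShift (ξ : Fin n → ℂ) (β : Fin n →₀ ℕ) (p : MvPolynomial (Fin n) ℂ) :
    pderivPow n β (taylorShift ξ p) = taylorShift ξ (pderivPow n β p) := by
  have : Commute (pderivPow n β) (taylorShift ξ).toLinearMap := by
    refine Commute.list_prod_left _ _ fun f hf => ?_
    obtain ⟨i, rfl⟩ := List.mem_ofFn.mp hf
    exact (commute_pderiv_taylorShift ξ i).pow_left _
  exact LinearMap.congr_fun this.eq p

end Translation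

section Monomial

variable {n : ℕ}

lemma pderiv_pow_monomial (k : Fin n) (m : ℕ) (s : Fin n →₀ ℕ) (a : ℂ) :
    (((pderiv k).toLinearMap : Module.End ℂ (MvPolynomial (Fin n) ℂ)) ^ m) (monomial s a)
      = monomial (s - Finsupp.single k m) (a * (s k).descFactorial m) := by
  induction m with
  | zero => simp
  | succ m ih =>
    rw [pow_succ', Module.End.mul_apply, ih, Derivation.coeFn_coe, pderiv_monomial, tsub_tsub,
      ← Finsupp.single_add, Finsupp.tsub_apply, Finsupp.single_eq_same, Nat.descFactorial_succ]
    push_cast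
    ring_nf

lemma list_prod_pderiv_pow_monomial (β : Fin n →₀ ℕ) {l : List (Fin n)} (hl : l.Nodup)
    (s : Fin n →₀ ℕ) (a : ℂ) :
    (l.map fun i => ((pderiv i).toLinearMap :
        Module.End ℂ (MvPolynomial (Fin n) ℂ)) ^ β i).prod (monomial s a)
      = monomial (s - (l.map fun i => Finsupp.single i (β i)).sum)
          (a * (l.map fun i => ((s i).descFactorial (β i) : ℂ)).prod) := by
  induction l with
  | nil => simp
  | cons i t ih =>
    obtain ⟨hi, ht⟩ := List.nodup_cons.mp hl
    have hst : (s - (t.map fun j => Finsupp.single j (β j)).sum) i = s i := by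
      have : (t.map fun j => Finsupp.single j (β j)).sum i = 0 := by
        rw [← Finsupp.applyAddHom_apply, map_list_sum, List.map_map]
        refine List.sum_eq_zero fun _ hm => ?_
        obtain ⟨j, hj, rfl⟩ := List.mem_map.mp hm
        exact Finsupp.single_eq_of_ne (by rintro rfl; exact hi hj)
      rw [Finsupp.tsub_apply, this, Nat.sub_zero]
    simp only [List.map_cons, List.prod_cons, List.sum_cons, Module.End.mul_apply, ih ht,
      pderiv_pow_monomial, hst, tsub_tsub, add_comm (Finsupp.single i (β i))]
    ring_nf

lemma pderivPow_monomial (β s : Fin n →₀ ℕ) (a : ℂ) :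
    pderivPow n β (monomial s a)
      = monomial (s - β) (a * ∏ i, ((s i).descFactorial (β i) : ℂ)) := by
  rw [pderivPow, List.ofFn_eq_map, list_prod_pderiv_pow_monomial β (List.nodup_finRange n),
    ← List.ofFn_eq_map, List.sum_ofFn, Finsupp.univ_sum_single, ← List.ofFn_eq_map,
    List.prod_ofFn]

lemma constantCoeff_pderivPow (β : Fin n →₀ ℕ) (p : MvPolynomial (Fin n) ℂ) :
    constantCoeff (pderivPow n β p) = (∏ i, ((β i).factorial : ℂ)) * coeff β p := by
  classical
  induction p using MvPolynomial.induction_on' with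
  | monomial s a =>
    simp only [pderivPow_monomial, constantCoeff_monomial, coeff_monomial, tsub_eq_zero_iff_le]
    by_cases hs : s = β
    · subst hs
      simp [Nat.descFactorial_self, mul_comm]
    by_cases hsβ : s ≤ β
    · obtain ⟨j, hj⟩ : ∃ j, s j < β j := by
        by_contra! h
        exact hs (le_antisymm hsβ h)
      have hzero : ∏ i, ((s i).descFactorial (β i) : ℂ) = 0 :=
        Finset.prod_eq_zero (Finset.mem_univ j) (by simp [Nat.descFactorial_eq_zero_iff_lt.mpr hj])
      simp [hs, hzero]
    · simp [hs, hsβ]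
  | add p q hp hq => rw [map_add, map_add, coeff_add, hp, hq, mul_add]

lemma eval_pderivPow (ξ : Fin n → ℂ) (β : Fin n →₀ ℕ) (p : MvPolynomial (Fin n) ℂ) :
    eval ξ (pderivPow n β p) = (∏ i, ((β i).factorial : ℂ)) * coeff β (taylorShift ξ p) := by
  rw [← constantCoeff_taylorShift, ← pderivPow_taylorShift, constantCoeff_pderivPow]

end Monomial

section PolyExp

variable {n : ℕ}

lemma polyExp_apply (ω : MvPolynomial (Fin n) ℂ) (ξ : Fin n → ℂ) (p : MvPolynomial (Fin n) ℂ) :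
    polyExp n ω ξ p = ∑ β ∈ ω.support,
      coeff β ω * ((∏ i, ((β i).factorial : ℂ)) * coeff β (taylorShift ξ p)) := by
  rw [polyExp, LinearMap.sum_apply]
  exact Finset.sum_congr rfl fun β _ => congrArg (coeff β ω * ·) (eval_pderivPow ξ β p)

lemma coeff_X_pow_mul_eq_zero {k : Fin n} {E : ℕ} {α : Fin n →₀ ℕ} (hα : α k < E)
    (q : MvPolynomial (Fin n) ℂ) : coeff α (X k ^ E * q) = 0 := by
  rw [X_pow_eq_monomial, coeff_monomial_mul', if_neg]
  exact fun hle => (Finsupp.single_le_iff.mp hle).not_gt hα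

lemma polyExp_X_sub_C_pow_mul {ω : MvPolynomial (Fin n) ℂ} {k : Fin n} {E : ℕ}
    (hE : ω.degreeOf k < E) (ξ : Fin n → ℂ) (q : MvPolynomial (Fin n) ℂ) :
    polyExp n ω ξ ((X k - C (ξ k)) ^ E * q) = 0 := by
  rw [polyExp_apply]
  refine Finset.sum_eq_zero fun β hβ => ?_
  rw [map_mul, map_pow, taylorShift_X_sub_C,
    coeff_X_pow_mul_eq_zero ((monomial_le_degreeOf k hβ).trans_lt hE), mul_zero, mul_zero]

lemma exists_polyExp_annihilator (ω : MvPolynomial (Fin n) ℂ) {ξ x : Fin n → ℂ} (hx : ξ ≠ x) :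
    ∃ u, eval x u ≠ 0 ∧ ∀ q, polyExp n ω ξ (u * q) = 0 := by
  obtain ⟨k, hk⟩ := Function.ne_iff.mp hx
  refine ⟨(X k - C (ξ k)) ^ (ω.degreeOf k + 1), ?_, polyExp_X_sub_C_pow_mul (Nat.lt_succ_self _) ξ⟩
  simpa [sub_eq_zero] using hk.symm

lemma exists_common_polyExp_annihilator {ι : Type*} (ω : ι → MvPolynomial (Fin n) ℂ)
    (ξ : ι → Fin n → ℂ) (s : Finset ι) {x : Fin n → ℂ} (hx : ∀ j ∈ s, ξ j ≠ x) :
    ∃ u, eval x u ≠ 0 ∧ ∀ j ∈ s, ∀ q, polyExp n (ω j) (ξ j) (u * q) = 0 := by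
  classical
  choose! u hux hu using fun j (hj : j ∈ s) => exists_polyExp_annihilator (ω j) (hx j hj)
  refine ⟨∏ j ∈ s, u j, by simpa [map_prod, Finset.prod_ne_zero_iff] using hux, fun j hj q => ?_⟩
  rw [← Finset.mul_prod_erase s u hj, mul_assoc]
  exact hu j hj _

lemma eval_eq_zero_of_forall_polyExp_mul_eq_zero {ω : MvPolynomial (Fin n) ℂ} (hω : ω ≠ 0)
    {ξ : Fin n → ℂ} {g : MvPolynomial (Fin n) ℂ} (h : ∀ q, polyExp n ω ξ (g * q) = 0) :
    eval ξ g = 0 := by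
  obtain ⟨β₀, hβ₀, hmax⟩ := ω.support.exists_maximal (support_nonempty.mpr hω)
  have h₀ := h (aeval (fun i => X i - C (ξ i)) (monomial β₀ (1 : ℂ)))
  rw [polyExp_apply, map_mul, taylorShift_aeval_X_sub_C, Finset.sum_eq_single_of_mem β₀ hβ₀]
    at h₀
  · have hfact : ∏ i, ((β₀ i).factorial : ℂ) ≠ 0 :=
      Finset.prod_ne_zero_iff.mpr fun i _ => Nat.cast_ne_zero.mpr (Nat.factorial_ne_zero _)
    simpa [coeff_mul_monomial', mem_support_iff.mp hβ₀, hfact, ← constantCoeff_eq,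
      constantCoeff_taylorShift] using h₀
  · intro β hβ hne
    rw [coeff_mul_monomial', if_neg fun hle => hne (le_antisymm (hmax hβ hle) hle), mul_zero,
      mul_zero]

end PolyExp

section ZeroLocus

variable {n : ℕ} {ι : Type*} [Fintype ι] (ω : ι → MvPolynomial (Fin n) ℂ) (ξ : ι → Fin n → ℂ)

lemma mem_range_of_forall_mem_Iσ_eval_eq_zero {x : Fin n → ℂ}
    (hx : ∀ p ∈ Iσ n (∑ i, polyExp n (ω i) (ξ i)), eval x p = 0) : x ∈ Set.range ξ := by
  by_contra hxξ
  obtain ⟨u, hux, hu⟩ :=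
    exists_common_polyExp_annihilator ω ξ Finset.univ fun j _ hj => hxξ ⟨j, hj⟩
  refine hux (hx u fun q => ?_)
  rw [LinearMap.sum_apply]
  exact Finset.sum_eq_zero fun j hj => hu j hj q

lemma eval_eq_zero_of_mem_Iσ {i : ι} (hωi : ω i ≠ 0) (hξ : Function.Injective ξ)
    {p : MvPolynomial (Fin n) ℂ} (hp : p ∈ Iσ n (∑ j, polyExp n (ω j) (ξ j))) :
    eval (ξ i) p = 0 := by
  classical
  obtain ⟨u, hui, hu⟩ := exists_common_polyExp_annihilator ω ξ (Finset.univ.erase i)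
    fun j hj => hξ.ne (Finset.ne_of_mem_erase hj)
  have hpu : ∀ q, polyExp n (ω i) (ξ i) (p * u * q) = 0 := fun q => by
    have hothers : ∀ j ∈ Finset.univ, j ≠ i → polyExp n (ω j) (ξ j) (p * (u * q)) = 0 :=
      fun j _ hji => by
        rw [mul_left_comm]
        exact hu j (Finset.mem_erase.mpr ⟨hji, Finset.mem_univ j⟩) _
    have hpq := hp (u * q)
    rwa [LinearMap.sum_apply, Finset.sum_eq_single_of_mem i (Finset.mem_univ i) hothers,
      ← mul_assoc] at hpq
  have := eval_eq_zero_of_forall_polyExp_mul_eq_zero hωi hpu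
  rw [map_mul] at this
  exact (mul_eq_zero.mp this).resolve_right hui

end ZeroLocus

/-- For `σ = Σᵢ ωᵢ e_{ξᵢ}` with pairwise distinct `ξᵢ` and nonzero `ωᵢ`, the
points `ξ₁,…,ξ_{r'}` are exactly the common roots of the polynomials of
`I_σ = ker H_σ`: `V(I_σ) = {ξ₁,…,ξ_{r'}}`. -/
theorem stmt16 (n r' : ℕ)
    (ω : Fin r' → MvPolynomial (Fin n) ℂ) (hω : ∀ i, ω i ≠ 0)
    (ξ : Fin r' → (Fin n → ℂ)) (hξ : Function.Injective ξ) :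
    {x : Fin n → ℂ |
        ∀ p ∈ Iσ n (∑ i, polyExp n (ω i) (ξ i)), MvPolynomial.eval x p = 0}
      = Set.range ξ := by
  refine Set.Subset.antisymm (fun x hx => mem_range_of_forall_mem_Iσ_eval_eq_zero ω ξ hx) ?_
  rintro _ ⟨i, rfl⟩ p hp
  exact eval_eq_zero_of_mem_Iσ ω ξ (hω i) hξ hp
end
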